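/- Let z₀ ∈ ℂ, ε > 0, and Ω = {z ∈ ℂ : |z - z₀| ≤ ε}. Suppose f : Ω → ℂ is analytic with |f(z₀)| ≤ a, |f'(z₀)| ≥ b, and sup_{z ∈ Ω} |f''(z)| ≤ d. If a + dε² < εb and dε/b < c < 1 for some constant c, then there is a unique z ∈ Ω with f(z) = 0. -/

import Mathlib

/-- Quantitative Newton's method / contraction principle for analytic functions
on a closed disk in ℂ (Lemma `Newton` of the paper). -/
theorem stmt_0 (z₀ : ℂ) (ε a b d : ℝ) (hε : 0 < ε) (hb : 0 < b)
    (U : Set ℂ) (hU : IsOpen U) (hΩU : Metric.closedBall z₀ ε ⊆ U)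
    (f : ℂ → ℂ) (hf : ∀ z ∈ U, DifferentiableAt ℂ f z)
    (ha : ‖f z₀‖ ≤ a)
    (hb' : b ≤ ‖deriv f z₀‖)
    (hd : ∀ z ∈ Metric.closedBall z₀ ε, ‖deriv (deriv f) z‖ ≤ d)
    (hcond : a + d * ε ^ 2 < ε * b)
    (hc : ∃ c : ℝ, d * ε / b < c ∧ c < 1) :
    ∃! z, z ∈ Metric.closedBall z₀ ε ∧ f z = 0 := by
  clear hc
  set s := Metric.closedBall z₀ ε with hs
  have hz₀s : z₀ ∈ s := Metric.mem_closedBall_self hε.le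
  have hd0 : 0 ≤ d := le_trans (norm_nonneg _) (hd z₀ hz₀s)
  have ha0 : 0 ≤ a := le_trans (norm_nonneg _) ha
  have hfd0 : deriv f z₀ ≠ 0 := by
    intro h
    rw [h] at hb'
    simp at hb'
    linarith
  -- analyticity
  have hfU : DifferentiableOn ℂ f U := fun z hz => (hf z hz).differentiableWithinAt
  have hanal : AnalyticOnNhd ℂ f U := hfU.analyticOnNhd hU
  have hanal' : AnalyticOnNhd ℂ (deriv f) U := hanal.deriv
  have hf' : ∀ z ∈ U, DifferentiableAt ℂ (deriv f) z := fun z hz =>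
    (hanal' z hz).differentiableAt
  -- bound on deriv f z - deriv f z₀ on s
  have hconv : Convex ℝ s := convex_closedBall z₀ ε
  have hderiv2 : ∀ z ∈ s, ‖fderiv ℂ (deriv f) z‖ ≤ d := by
    intro z hz
    have h1 : fderiv ℂ (deriv f) z =
        ContinuousLinearMap.smulRight (1 : ℂ →L[ℂ] ℂ) (deriv (deriv f) z) :=
      ((hf' z (hΩU hz)).hasDerivAt.hasFDerivAt).fderiv
    rw [h1, ContinuousLinearMap.norm_smulRight_apply]
    rw [norm_one, one_mul]
    exact hd z hz
  have key : ∀ z ∈ s, ‖deriv f z - deriv f z₀‖ ≤ d * ε := by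
    intro z hz
    have := hconv.norm_image_sub_le_of_norm_fderiv_le
      (fun x hx => hf' x (hΩU hx)) hderiv2 hz₀s hz
    calc ‖deriv f z - deriv f z₀‖ ≤ d * ‖z - z₀‖ := this
      _ ≤ d * ε := by
          apply mul_le_mul_of_nonneg_left _ hd0
          rwa [← dist_eq_norm, ← Metric.mem_closedBall]
  -- the Newton map
  set g : ℂ → ℂ := fun z => z - f z / deriv f z₀ with hg
  have hgzero : ∀ z, g z = z ↔ f z = 0 := by
    intro z
    simp only [hg, sub_eq_self, div_eq_zero_iff, hfd0, or_false]
  have hgd : ∀ z ∈ U, HasDerivAt g (1 - deriv f z / deriv f z₀) z := by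
    intro z hz
    exact (hasDerivAt_id z).sub (((hf z hz).hasDerivAt).div_const _)
  set k : ℝ := d * ε / b with hk
  have hk0 : 0 ≤ k := div_nonneg (mul_nonneg hd0 hε.le) hb.le
  have hdeb : d * ε < b := by nlinarith
  have hk1 : k < 1 := (div_lt_one hb).2 hdeb
  have hgd_bound : ∀ z ∈ s, ‖fderiv ℂ g z‖ ≤ k := by
    intro z hz
    have h1 : fderiv ℂ g z =
        ContinuousLinearMap.smulRight (1 : ℂ →L[ℂ] ℂ) (1 - deriv f z / deriv f z₀) :=
      ((hgd z (hΩU hz)).hasFDerivAt).fderiv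
    rw [h1, ContinuousLinearMap.norm_smulRight_apply]
    rw [norm_one, one_mul]
    have h2 : (1 : ℂ) - deriv f z / deriv f z₀ = (deriv f z₀ - deriv f z) / deriv f z₀ := by
      field_simp
    rw [h2]
    show ‖_‖ ≤ k
    rw [norm_div, hk]
    apply div_le_div₀ (mul_nonneg hd0 hε.le) _ hb hb'
    rw [norm_sub_rev]
    exact key z hz
  have hlip : ∀ x ∈ s, ∀ y ∈ s, ‖g y - g x‖ ≤ k * ‖y - x‖ := by
    intro x hx y hy
    exact hconv.norm_image_sub_le_of_norm_fderiv_le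
      (fun w hw => ((hgd w (hΩU hw)).differentiableAt)) hgd_bound hx hy
  have hmaps : Set.MapsTo g s s := by
    intro z hz
    have h1 : ‖g z - g z₀‖ ≤ k * ε := by
      calc ‖g z - g z₀‖ ≤ k * ‖z - z₀‖ := hlip z₀ hz₀s z hz
        _ ≤ k * ε := by
            apply mul_le_mul_of_nonneg_left _ hk0
            rwa [← dist_eq_norm, ← Metric.mem_closedBall]
    have h2 : ‖g z₀ - z₀‖ ≤ a / b := by
      have : g z₀ - z₀ = -(f z₀ / deriv f z₀) := by simp [hg]
      rw [this, norm_neg]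
      show ‖_‖ ≤ _
      rw [norm_div]
      exact div_le_div₀ ha0 ha hb hb'
    have : dist (g z) z₀ ≤ k * ε + a / b := by
      calc dist (g z) z₀ ≤ dist (g z) (g z₀) + dist (g z₀) z₀ := dist_triangle _ _ _
        _ ≤ k * ε + a / b := by
            rw [dist_eq_norm, dist_eq_norm]; exact add_le_add h1 h2
    refine Metric.mem_closedBall.2 (le_trans this ?_)
    rw [hk, div_mul_eq_mul_div, ← add_div]
    rw [div_le_iff₀ hb]
    nlinarith
  -- contraction on the subtype
  set K : NNReal := ⟨k, hk0⟩ with hK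
  have hcontr : ContractingWith K (hmaps.restrict g s s) := by
    constructor
    · exact_mod_cast hk1
    · intro x y
      have : edist (hmaps.restrict g s s x) (hmaps.restrict g s s y) = edist (g x.1) (g y.1) :=
        rfl
      rw [this]
      rw [edist_dist, edist_dist]
      have hd1 : dist (g x.1) (g y.1) ≤ k * dist x.1 y.1 := by
        rw [dist_eq_norm, dist_eq_norm]
        exact hlip y.1 y.2 x.1 x.2
      calc ENNReal.ofReal (dist (g x.1) (g y.1)) ≤ ENNReal.ofReal (k * dist x.1 y.1) :=
            ENNReal.ofReal_le_ofReal hd1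
        _ = K * ENNReal.ofReal (dist x.1 y.1) := by
            rw [ENNReal.ofReal_mul hk0]
            rw [hK]
            simp [ENNReal.ofReal, Real.toNNReal_of_nonneg hk0]
            rfl
  have hsc : IsComplete s := (Metric.isClosed_closedBall).isComplete
  obtain ⟨y, hys, hfy, -, -⟩ := hcontr.exists_fixedPoint' hsc hmaps hz₀s (edist_ne_top _ _)
  refine ⟨y, ⟨hys, (hgzero y).1 hfy⟩, ?_⟩
  rintro w ⟨hws, hfw⟩
  have hfixw : g w = w := (hgzero w).2 hfw
  have h1 : dist w y ≤ k * dist w y := by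
    have := hlip y hys w hws
    rw [hfixw, hfy] at this
    rw [dist_eq_norm]
    exact this
  by_contra hne
  have : 0 < dist w y := dist_pos.2 hne
  nlinarith
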